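/- Let M = I - Q be an n×n SDD matrix where Q is entrywise nonnegative with zero diagonal and ρ(Q) ≤ 1/3. Let v = (I - Q)𝟙 (entrywise nonnegative) and define the (n+1)×(n+1) matrix L = [[I, 0],[0, ‖v‖_1]] - [[Q, v],[v^T, 0]]. Then L is a graph Laplacian (symmetric, zero row sums, nonpositive off-diagonal entries), and for all i, j ∈ [n], δ_{i,j}^T L^† δ_{i,j} = δ_{i,j}^T M^{-1} δ_{i,j}, where δ_{i,j} on the left is embedded into ℝ^{n+1}. -/

import Mathlib

open Matrix

/-- `P` is the Moore–Penrose pseudoinverse of the square matrix `M`. -/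
def IsMoorePenrose {α : Type*} [Fintype α] [DecidableEq α]
    (M P : Matrix α α ℝ) : Prop :=
  M * P * M = M ∧ P * M * P = P ∧ (M * P)ᵀ = M * P ∧ (P * M)ᵀ = P * M

/-- The vector `e i - e j`. -/
def delta {α : Type*} [DecidableEq α] (i j : α) : α → ℝ :=
  fun k => (if k = i then 1 else 0) - (if k = j then 1 else 0)

/-!
Strict diagonal dominance makes `M = 1 - Q` invertible. For `x = M⁻¹ δᵢⱼ` the ground row of `L`
applied to `(x, 0)` is `-vᵀx = -𝟙ᵀ M x = -𝟙ᵀ δᵢⱼ = 0`, so `L (x, 0) = (δᵢⱼ, 0)`. For symmetric `L`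
and any `w`, `(Lw)ᵀ L^† (Lw) = wᵀ L L^† L w = wᵀ L w`, which here is `xᵀ δᵢⱼ = δᵢⱼᵀ M⁻¹ δᵢⱼ`.
-/

section Symmetric

variable {ι R : Type*} [Fintype ι] [CommSemiring R]

theorem mulVec_dotProduct_of_transpose_eq {A : Matrix ι ι R} (hA : Aᵀ = A) (x y : ι → R) :
    A *ᵥ x ⬝ᵥ y = x ⬝ᵥ A *ᵥ y := by
  rw [dotProduct_mulVec, ← mulVec_transpose, hA]

theorem dotProduct_mulVec_of_mul_mul_self_eq {L P : Matrix ι ι R} (hL : Lᵀ = L)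
    (hLPL : L * P * L = L) {w b : ι → R} (hw : L *ᵥ w = b) :
    b ⬝ᵥ P *ᵥ b = w ⬝ᵥ b := by
  calc b ⬝ᵥ P *ᵥ b = L *ᵥ w ⬝ᵥ P *ᵥ (L *ᵥ w) := by rw [hw]
    _ = w ⬝ᵥ (L * P * L) *ᵥ w := by
      rw [mulVec_dotProduct_of_transpose_eq hL, mulVec_mulVec, mulVec_mulVec]
    _ = w ⬝ᵥ b := by rw [hLPL, hw]

end Symmetric

theorem isUnit_det_one_sub_of_sum_lt_one {ι : Type*} [Fintype ι] [DecidableEq ι]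
    {Q : Matrix ι ι ℝ} (hQ : ∀ i j, 0 ≤ Q i j) (hrow : ∀ i, ∑ j, Q i j < 1) :
    IsUnit (1 - Q).det := by
  refine isUnit_iff_ne_zero.mpr (det_ne_zero_of_sum_row_lt_diag fun k => ?_)
  have hoff : ∑ j ∈ Finset.univ.erase k, ‖(1 - Q) k j‖ = ∑ j ∈ Finset.univ.erase k, Q k j :=
    Finset.sum_congr rfl fun j hj => by
      simp [one_apply_ne' (Finset.ne_of_mem_erase hj), abs_of_nonneg (hQ k j)]
  have hsplit := Finset.add_sum_erase Finset.univ (Q k) (Finset.mem_univ k)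
  rw [hoff, Matrix.sub_apply, one_apply_eq, Real.norm_eq_abs]
  linarith [hrow k, le_abs_self (1 - Q k k)]

theorem sum_delta {ι : Type*} [Fintype ι] [DecidableEq ι] (i j : ι) : ∑ k, delta i j k = 0 := by
  simp [delta, Finset.sum_sub_distrib]

theorem delta_inl {ι κ : Type*} [DecidableEq ι] [DecidableEq κ] (i j : ι) :
    delta (Sum.inl i : ι ⊕ κ) (Sum.inl j) = Sum.elim (delta i j) 0 := by
  ext (k | k) <;> simp [delta]

/-- `1 - Q` extended by a ground vertex joined to each `i` with weight `v i`. -/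
def augmentedLaplacian {ι : Type*} [Fintype ι] [DecidableEq ι] (Q : Matrix ι ι ℝ) (v : ι → ℝ) :
    Matrix (ι ⊕ Unit) (ι ⊕ Unit) ℝ :=
  fromBlocks (1 - Q) (of fun i _ => -(v i)) (of fun _ j => -(v j)) (of fun _ _ => ∑ i, |v i|)

section AugmentedLaplacian

variable {ι : Type*} [Fintype ι] [DecidableEq ι] {Q : Matrix ι ι ℝ} {v : ι → ℝ}

theorem transpose_augmentedLaplacian (hQ : Qᵀ = Q) :
    (augmentedLaplacian Q v)ᵀ = augmentedLaplacian Q v := by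
  rw [augmentedLaplacian, fromBlocks_transpose, transpose_sub, transpose_one, hQ]
  rfl

theorem sum_augmentedLaplacian_apply (hv : v = (1 - Q) *ᵥ fun _ => 1) (hv₀ : ∀ i, 0 ≤ v i)
    (a : ι ⊕ Unit) : ∑ b, augmentedLaplacian Q v a b = 0 := by
  rcases a with i | _
  · have : ∑ j, (1 - Q) i j = v i := by simp [hv, mulVec, dotProduct]
    simp only [augmentedLaplacian, Fintype.sum_sum_type, fromBlocks_apply₁₁, fromBlocks_apply₁₂,
      of_apply, this, Finset.univ_unique, Finset.sum_singleton, add_neg_cancel]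
  · simp [augmentedLaplacian, Fintype.sum_sum_type, abs_of_nonneg (hv₀ _)]

theorem augmentedLaplacian_apply_nonpos (hQ : ∀ i j, 0 ≤ Q i j) (hv₀ : ∀ i, 0 ≤ v i)
    {a b : ι ⊕ Unit} (hab : a ≠ b) : augmentedLaplacian Q v a b ≤ 0 := by
  rcases a with i | _ <;> rcases b with j | _
  · have hij : i ≠ j := fun h => hab (congrArg Sum.inl h)
    simpa [augmentedLaplacian, one_apply_ne hij] using hQ i j
  · simpa [augmentedLaplacian] using hv₀ i
  · simpa [augmentedLaplacian] using hv₀ j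
  · exact absurd rfl hab

theorem augmentedLaplacian_mulVec_sumElim {x : ι → ℝ} (hx : v ⬝ᵥ x = 0) :
    augmentedLaplacian Q v *ᵥ Sum.elim x 0 = Sum.elim ((1 - Q) *ᵥ x) 0 := by
  ext (i | _)
  · simp [augmentedLaplacian, fromBlocks_mulVec]
  · simpa [augmentedLaplacian, fromBlocks_mulVec, mulVec, dotProduct] using hx

end AugmentedLaplacian

theorem stmt13_general {n : ℕ} (Q : Matrix (Fin n) (Fin n) ℝ)
    (hQsymm : Qᵀ = Q) (hQnn : ∀ i j, 0 ≤ Q i j)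
    (hrow : ∀ i, ∑ j, Q i j < 1)
    (v : Fin n → ℝ) (hv : v = (1 - Q).mulVec (fun _ => 1))
    (L : Matrix (Fin n ⊕ Unit) (Fin n ⊕ Unit) ℝ)
    (hL : L = Matrix.fromBlocks (1 - Q) (Matrix.of fun i _ => -(v i))
      (Matrix.of fun _ j => -(v j)) (Matrix.of fun _ _ => ∑ i, |v i|))
    (Ldag : Matrix (Fin n ⊕ Unit) (Fin n ⊕ Unit) ℝ)
    (hLdag : IsMoorePenrose L Ldag) :
    (Lᵀ = L) ∧ (∀ a, ∑ b, L a b = 0) ∧ (∀ a b, a ≠ b → L a b ≤ 0) ∧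
    ∀ i j : Fin n,
      delta (Sum.inl i) (Sum.inl j) ⬝ᵥ Ldag.mulVec (delta (Sum.inl i) (Sum.inl j)) =
        delta i j ⬝ᵥ (1 - Q)⁻¹.mulVec (delta i j) := by
  obtain rfl : L = augmentedLaplacian Q v := hL
  have hv₀ : ∀ i, 0 ≤ v i := fun i => by
    simpa [hv, mulVec, dotProduct, one_apply, Finset.sum_sub_distrib] using (hrow i).le
  have hsymm := transpose_augmentedLaplacian (v := v) hQsymm
  refine ⟨hsymm, sum_augmentedLaplacian_apply hv hv₀,
    fun _ _ => augmentedLaplacian_apply_nonpos hQnn hv₀, fun i j => ?_⟩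
  set x := (1 - Q)⁻¹ *ᵥ delta i j
  have hMx : (1 - Q) *ᵥ x = delta i j := by
    rw [mulVec_mulVec, mul_nonsing_inv _ (isUnit_det_one_sub_of_sum_lt_one hQnn hrow),
      one_mulVec]
  have hvx : v ⬝ᵥ x = 0 := by
    rw [hv, mulVec_dotProduct_of_transpose_eq (by simp [hQsymm]), hMx, dotProduct_comm,
      ← Pi.one_def, dotProduct_one, sum_delta]
  rw [delta_inl, dotProduct_mulVec_of_mul_mul_self_eq hsymm hLdag.1
    (by rw [augmentedLaplacian_mulVec_sumElim hvx, hMx]),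
    sumElim_dotProduct_sumElim, zero_dotProduct, add_zero, dotProduct_comm]

theorem stmt13 {n : ℕ} (Q : Matrix (Fin n) (Fin n) ℝ)
    (hQsymm : Qᵀ = Q) (hQnn : ∀ i j, 0 ≤ Q i j) (hQdiag : ∀ i, Q i i = 0)
    (hρ : ∀ μ ∈ spectrum ℝ Q, |μ| ≤ 1 / 3)
    (hrow : ∀ i, ∑ j, Q i j < 1)
    (v : Fin n → ℝ) (hv : v = (1 - Q).mulVec (fun _ => 1))
    (L : Matrix (Fin n ⊕ Unit) (Fin n ⊕ Unit) ℝ)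
    (hL : L = Matrix.fromBlocks (1 - Q) (Matrix.of fun i _ => -(v i))
      (Matrix.of fun _ j => -(v j)) (Matrix.of fun _ _ => ∑ i, |v i|))
    (Ldag : Matrix (Fin n ⊕ Unit) (Fin n ⊕ Unit) ℝ)
    (hLdag : IsMoorePenrose L Ldag) :
    (Lᵀ = L) ∧ (∀ a, ∑ b, L a b = 0) ∧ (∀ a b, a ≠ b → L a b ≤ 0) ∧
    ∀ i j : Fin n,
      delta (Sum.inl i) (Sum.inl j) ⬝ᵥ Ldag.mulVec (delta (Sum.inl i) (Sum.inl j)) =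
        delta i j ⬝ᵥ (1 - Q)⁻¹.mulVec (delta i j) :=
  stmt13_general Q hQsymm hQnn hrow v hv L hL Ldag hLdag
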